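/- arXiv:1706.05621 — 2 statements merged into one kernel-verified Lean document; each statement's English description precedes it below -/
import Mathlib

section
/- For any continuous function f : I → ℝ on an interval I ⊆ ℝ≥0 and any points x, y ∈ I with x ≤ y such that f is constant on [x, y], the pivoted excursion operators agree: 𝓔_x(f) = 𝓔_y(f). -/
/-- Pivoted excursion operator: `𝓔_b(f)(t) = f t - min_{min(b,t) ≤ s ≤ max(b,t)} f s`. -/
noncomputable def pivotExc (b : ℝ) (f : ℝ → ℝ) (t : ℝ) : ℝ :=
  f t - sInf (f '' Set.uIcc b t)

theorem stmt1 (I : Set ℝ) (hI0 : I ⊆ Set.Ici 0) (hI : I.OrdConnected)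
    (f : ℝ → ℝ) (hf : ContinuousOn f I)
    (x y : ℝ) (hx : x ∈ I) (hy : y ∈ I) (hxy : x ≤ y)
    (hconst : ∀ s ∈ Set.Icc x y, f s = f x) :
    ∀ t ∈ I, pivotExc x f t = pivotExc y f t := by
  intro t ht
  have hbdd : ∀ a b : ℝ, a ∈ I → b ∈ I → BddBelow (f '' Set.uIcc a b) := fun a b ha hb =>
    (isCompact_uIcc.image_of_continuousOn (hf.mono (hI.uIcc_subset ha hb))).bddBelow
  have himg : f '' Set.Icc x y = {f x} := by
    apply Set.Subset.antisymm
    · rintro _ ⟨s, hs, rfl⟩; exact hconst s hs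
    · rintro _ rfl; exact ⟨x, Set.left_mem_Icc.mpr hxy, rfl⟩
  have hfy : f y = f x := hconst y (Set.right_mem_Icc.mpr hxy)
  unfold pivotExc
  congr 1
  rcases le_or_gt t x with htx | hxt
  · -- t ≤ x ≤ y
    have h1 : Set.uIcc y t = Set.uIcc x t ∪ Set.Icc x y := by
      rw [Set.uIcc_comm y t, Set.uIcc_of_le (htx.trans hxy), Set.uIcc_comm x t,
        Set.uIcc_of_le htx, Set.Icc_union_Icc_eq_Icc htx hxy]
    rw [h1, Set.image_union, himg,
      csInf_union (hbdd x t hx ht) (by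
        exact ⟨f x, ⟨x, Set.left_mem_uIcc, rfl⟩⟩) bddBelow_singleton
        (Set.singleton_nonempty _), csInf_singleton]
    exact (min_eq_left (csInf_le (hbdd x t hx ht) ⟨x, Set.left_mem_uIcc, rfl⟩)).symm
  rcases le_or_gt t y with hty | hyt
  · -- x ≤ t ≤ y
    have h1 : f '' Set.uIcc x t = {f x} := by
      apply Set.Subset.antisymm
      · rintro _ ⟨s, hs, rfl⟩
        rw [Set.uIcc_of_le hxt.le] at hs
        exact hconst s (Set.Icc_subset_Icc le_rfl hty hs)
      · rintro _ rfl; exact ⟨x, Set.left_mem_uIcc, rfl⟩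
    have h2 : f '' Set.uIcc y t = {f x} := by
      apply Set.Subset.antisymm
      · rintro _ ⟨s, hs, rfl⟩
        rw [Set.uIcc_comm, Set.uIcc_of_le hty] at hs
        exact hconst s (Set.Icc_subset_Icc hxt.le le_rfl hs)
      · rintro _ rfl; exact ⟨y, Set.left_mem_uIcc, hfy⟩
    rw [h1, h2]
  · -- x ≤ y ≤ t
    have h1 : Set.uIcc x t = Set.Icc x y ∪ Set.uIcc y t := by
      rw [Set.uIcc_of_le (hxt.le), Set.uIcc_of_le hyt.le,
        Set.Icc_union_Icc_eq_Icc hxy hyt.le]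
    rw [h1, Set.image_union, himg,
      csInf_union bddBelow_singleton (Set.singleton_nonempty _)
        (hbdd y t hy ht) ⟨f x, ⟨y, Set.left_mem_uIcc, hfy⟩⟩, csInf_singleton]
    exact min_eq_right (csInf_le (hbdd y t hy ht) ⟨y, Set.left_mem_uIcc, hfy⟩)
end

section
/- For any finitely supported box-ball configuration, the hill-flattening operator never increases the number of hills: ρ(𝓗(Γ)) ≤ ρ(Γ) for every Motzkin path Γ, and after max(Γ) applications the path has no hills: ρ(𝓗^{max Γ}(Γ)) = 0. -/
/-- A Motzkin path: starts at 0, steps in {−1,0,+1}, nonnegative (ℕ-valued), eventually 0. -/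
def IsMotzkin (Γ : ℕ → ℕ) : Prop :=
  Γ 0 = 0 ∧
  (∀ k, (Γ (k + 1) : ℤ) - (Γ k : ℤ) = 1 ∨ (Γ (k + 1) : ℤ) - (Γ k : ℤ) = 0 ∨
    (Γ (k + 1) : ℤ) - (Γ k : ℤ) = -1) ∧
  ∃ N, ∀ k, N ≤ k → Γ k = 0

/-- `[a,b]` is a hill interval of `Γ`: `Γ (a-1) = Γ c - 1 = Γ (b+1)` for all `c ∈ [a,b]`. -/
def IsHillInterval (Γ : ℕ → ℕ) (a b : ℕ) : Prop :=
  1 ≤ a ∧ a ≤ b ∧ ∀ c, a ≤ c → c ≤ b → Γ c = Γ (a - 1) + 1 ∧ Γ (b + 1) = Γ (a - 1)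

open Classical in
/-- The hill-flattening operator: decrease `Γ` by 1 on every point of a hill interval. -/
noncomputable def hillFlatten (Γ : ℕ → ℕ) : ℕ → ℕ := fun k =>
  if ∃ a b, IsHillInterval Γ a b ∧ a ≤ k ∧ k ≤ b then Γ k - 1 else Γ k

/-- The number of hill intervals of `Γ`. -/
noncomputable def numHills (Γ : ℕ → ℕ) : ℕ :=
  {q : ℕ × ℕ | IsHillInterval Γ q.1 q.2}.ncard

/-- The excursion operator pivoted at `x`:
`𝓔_x(Γ)(k) = Γ k − min_{min(x,k) ≤ y ≤ max(x,k)} Γ y`. -/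
def pivotExcPath (x : ℕ) (Γ : ℕ → ℕ) : ℕ → ℕ := fun k =>
  Γ k - (Finset.Icc (min x k) (max x k)).inf' (Finset.nonempty_Icc.mpr min_le_max) Γ

-- basic lemmas
lemma hill_mem_val {Γ : ℕ → ℕ} {a b c : ℕ} (h : IsHillInterval Γ a b)
    (h1 : a ≤ c) (h2 : c ≤ b) : Γ c = Γ (a-1) + 1 := (h.2.2 c h1 h2).1

lemma hill_bp1 {Γ : ℕ → ℕ} {a b : ℕ} (h : IsHillInterval Γ a b) :
    Γ (b+1) = Γ (a-1) := (h.2.2 a le_rfl h.2.1).2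

lemma hf_in {Γ : ℕ → ℕ} {a b k : ℕ} (h : IsHillInterval Γ a b) (h1 : a ≤ k) (h2 : k ≤ b) :
    hillFlatten Γ k = Γ k - 1 := by
  unfold hillFlatten; rw [if_pos ⟨a, b, h, h1, h2⟩]

lemma hf_out {Γ : ℕ → ℕ} {k : ℕ} (h : ¬ ∃ a b, IsHillInterval Γ a b ∧ a ≤ k ∧ k ≤ b) :
    hillFlatten Γ k = Γ k := by
  unfold hillFlatten; rw [if_neg h]

lemma hf_le (Γ : ℕ → ℕ) (k : ℕ) : hillFlatten Γ k ≤ Γ k := by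
  unfold hillFlatten; split <;> omega

lemma hill_disjoint {Γ : ℕ → ℕ} {a b a' b' k : ℕ}
    (h : IsHillInterval Γ a b) (h' : IsHillInterval Γ a' b')
    (hk1 : a ≤ k) (hk2 : k ≤ b) (hk3 : a' ≤ k) (hk4 : k ≤ b') :
    a = a' ∧ b = b' := by
  have hstart : ∀ (a b a' b' k : ℕ), IsHillInterval Γ a b → IsHillInterval Γ a' b' →
      a ≤ k → k ≤ b → a' ≤ k → k ≤ b' → ¬ a < a' := by
    intro a b a' b' k h h' hk1 hk2 hk3 hk4 hlt
    have e1 : Γ (a'-1) = Γ (a-1) + 1 := hill_mem_val h (by omega) (by omega)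
    have e2 : Γ a' = Γ (a-1) + 1 := hill_mem_val h (by omega) (by omega)
    have e3 : Γ a' = Γ (a'-1) + 1 := hill_mem_val h' le_rfl h'.2.1
    omega
  have ha : a = a' := by
    have := hstart a b a' b' k h h' hk1 hk2 hk3 hk4
    have := hstart a' b' a b k h' h hk3 hk4 hk1 hk2
    omega
  subst ha
  have hend : ∀ (b b' : ℕ), IsHillInterval Γ a b → IsHillInterval Γ a b' →
      a ≤ k → k ≤ b → k ≤ b' → ¬ b < b' := by
    intro b b' h h' hk1 hk2 hk4 hlt
    have e1 : Γ (b+1) = Γ (a-1) := hill_bp1 h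
    have e2 : Γ (b+1) = Γ (a-1) + 1 := hill_mem_val h' (by omega) (by omega)
    omega
  refine ⟨rfl, ?_⟩
  have := hend b b' h h' hk1 hk2 hk4
  have := hend b' b h' h hk1 hk4 hk2
  omega

lemma hills_finite {Γ : ℕ → ℕ} (hΓ : IsMotzkin Γ) :
    {q : ℕ × ℕ | IsHillInterval Γ q.1 q.2}.Finite := by
  obtain ⟨N, hN⟩ := hΓ.2.2
  apply Set.Finite.subset (Set.finite_Iic (N, N))
  rintro ⟨a, b⟩ ⟨h1, h2, h3⟩
  have hb := (h3 b h2 le_rfl).1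
  have hbN : b ≤ N := by
    by_contra hc
    have := hN b (by omega)
    omega
  exact ⟨by simpa using le_trans h2 hbN, by simpa using hbN⟩

lemma motzkin_hf {Γ : ℕ → ℕ} (hΓ : IsMotzkin Γ) : IsMotzkin (hillFlatten Γ) := by
  obtain ⟨h0, hstep, N, hN⟩ := hΓ
  refine ⟨?_, ?_, N, ?_⟩
  · have h : ¬ ∃ a b, IsHillInterval Γ a b ∧ a ≤ 0 ∧ 0 ≤ b := by
      rintro ⟨a, b, h, ha, -⟩
      have := h.1; omega
    rw [hf_out h, h0]
  · intro k
    by_cases hk : ∃ a b, IsHillInterval Γ a b ∧ a ≤ k ∧ k ≤ b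
    · obtain ⟨a, b, hab, ha, hb⟩ := hk
      have ek : hillFlatten Γ k = Γ k - 1 := hf_in hab ha hb
      have evk : Γ k = Γ (a-1) + 1 := hill_mem_val hab ha hb
      by_cases hk1 : ∃ a' b', IsHillInterval Γ a' b' ∧ a' ≤ k+1 ∧ k+1 ≤ b'
      · obtain ⟨a', b', hab', ha', hb'⟩ := hk1
        have ek1 : hillFlatten Γ (k+1) = Γ (k+1) - 1 := hf_in hab' ha' hb'
        by_cases hsame : a' ≤ k
        · have := hill_disjoint hab hab' ha hb hsame (by omega)
          obtain ⟨rfl, rfl⟩ := this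
          have evk1 : Γ (k+1) = Γ (a-1) + 1 := hill_mem_val hab ha' hb'
          omega
        · -- a' = k+1, and b = k
          have ha'e : a' = k + 1 := by omega
          have hbe : b = k := by
            by_contra hc
            have := hill_disjoint hab hab' (k := k+1) (by omega) (by omega) (by omega) hb'
            omega
          have e1 : Γ (k+1) = Γ (a-1) := by
            have := hill_bp1 hab; rw [hbe] at this; exact this
          have e2 : Γ (k+1) = Γ k + 1 := by
            have := hill_mem_val hab' le_rfl hab'.2.1
            rw [ha'e] at this; simpa using this
          omega
      · have ek1 : hillFlatten Γ (k+1) = Γ (k+1) := hf_out hk1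
        have hbe : b = k := by
          by_contra hc
          exact hk1 ⟨a, b, hab, by omega, by omega⟩
        have e1 : Γ (k+1) = Γ (a-1) := by
          have := hill_bp1 hab; rw [hbe] at this; exact this
        omega
    · have ek : hillFlatten Γ k = Γ k := hf_out hk
      by_cases hk1 : ∃ a' b', IsHillInterval Γ a' b' ∧ a' ≤ k+1 ∧ k+1 ≤ b'
      · obtain ⟨a', b', hab', ha', hb'⟩ := hk1
        have ek1 : hillFlatten Γ (k+1) = Γ (k+1) - 1 := hf_in hab' ha' hb'
        have ha'e : a' = k + 1 := by
          by_contra hc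
          exact hk ⟨a', b', hab', by omega, by omega⟩
        have e2 : Γ (k+1) = Γ k + 1 := by
          have := hill_mem_val hab' le_rfl hab'.2.1
          rw [ha'e] at this; simpa using this
        omega
      · have ek1 : hillFlatten Γ (k+1) = Γ (k+1) := hf_out hk1
        have := hstep k
        omega
  · intro k hk
    have := hf_le Γ k
    have := hN k hk
    omega

lemma hf_max {Γ : ℕ → ℕ} (hΓ : IsMotzkin Γ) (M : ℕ) (hM : ∀ k, Γ k ≤ M + 1) :
    ∀ k, hillFlatten Γ k ≤ M := by
  obtain ⟨h0, hstep, N, hN⟩ := hΓ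
  have hstep' : ∀ k, Γ (k+1) ≤ Γ k + 1 ∧ Γ k ≤ Γ (k+1) + 1 := by
    intro k; have := hstep k; omega
  intro k
  by_cases h : Γ k ≤ M
  · exact le_trans (hf_le Γ k) h
  · have hk : Γ k = M + 1 := by have := hM k; omega
    -- find hill containing k
    have hP : ∃ j, Γ (k - j) ≠ M + 1 := ⟨k, by rw [Nat.sub_self, h0]; omega⟩
    have hQ : ∃ j, Γ (k + j) ≠ M + 1 := ⟨N, by rw [hN (k+N) (by omega)]; omega⟩
    set j0 := Nat.find hP with hj0
    set j1 := Nat.find hQ with hj1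
    have hj0s : Γ (k - j0) ≠ M + 1 := Nat.find_spec hP
    have hj1s : Γ (k + j1) ≠ M + 1 := Nat.find_spec hQ
    have hj0pos : 1 ≤ j0 := by
      rcases Nat.eq_zero_or_pos j0 with h' | h'
      · rw [h'] at hj0s; simp at hj0s; omega
      · omega
    have hj1pos : 1 ≤ j1 := by
      rcases Nat.eq_zero_or_pos j1 with h' | h'
      · rw [h'] at hj1s; simp at hj1s; omega
      · omega
    have hj0k : j0 ≤ k := Nat.find_le (by rw [Nat.sub_self, h0]; omega)
    have hmid : ∀ c, k - j0 + 1 ≤ c → c ≤ k + j1 - 1 → Γ c = M + 1 := by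
      intro c hc1 hc2
      rcases le_or_gt c k with hck | hck
      · have hlt : k - c < j0 := by omega
        have := Nat.find_min hP hlt
        simp only [ne_eq, not_not] at this
        rwa [Nat.sub_sub_self hck] at this
      · have hlt : c - k < j1 := by omega
        have := Nat.find_min hQ hlt
        simp only [ne_eq, not_not] at this
        rwa [Nat.add_sub_cancel' (by omega : k ≤ c)] at this
    set a := k - j0 + 1 with ha
    set b := k + j1 - 1 with hb
    have ham1 : a - 1 = k - j0 := by omega
    have hGa : Γ a = M + 1 := hmid a le_rfl (by omega)
    have hGam1 : Γ (a - 1) = M := by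
      rw [ham1]
      have h1 := hM (k - j0)
      have h2 := (hstep' (a-1)).1
      rw [(by omega : a - 1 + 1 = a), ham1] at h2
      omega
    have hGbp1 : Γ (b + 1) = M := by
      rw [(by omega : b + 1 = k + j1)]
      have h1 := hM (k + j1)
      have h2 := (hstep' b).2
      rw [(by omega : b + 1 = k + j1)] at h2
      have hGb : Γ b = M + 1 := hmid b (by omega) le_rfl
      omega
    have hhill : IsHillInterval Γ a b := by
      refine ⟨by omega, by omega, fun c hc1 hc2 => ⟨?_, ?_⟩⟩
      · rw [hmid c hc1 hc2, hGam1]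
      · rw [hGbp1, hGam1]
    have := hf_in hhill (by omega : a ≤ k) (by omega : k ≤ b)
    omega

lemma range_bdd {Γ : ℕ → ℕ} (hΓ : IsMotzkin Γ) (k : ℕ) : Γ k ≤ sSup (Set.range Γ) := by
  obtain ⟨N, hN⟩ := hΓ.2.2
  have hsub : Set.range Γ ⊆ Γ '' Set.Iic N := by
    rintro _ ⟨j, rfl⟩
    by_cases hj : j ≤ N
    · exact ⟨j, Set.mem_Iic.mpr hj, rfl⟩
    · exact ⟨N, Set.mem_Iic.mpr le_rfl, by rw [hN N le_rfl, hN j (by omega)]⟩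
  have hfin : (Set.range Γ).Finite := Set.Finite.subset ((Set.finite_Iic N).image Γ) hsub
  exact le_csSup hfin.bddAbove ⟨k, rfl⟩

lemma iter_bound {Γ : ℕ → ℕ} (hΓ : IsMotzkin Γ) (M : ℕ) (hM : ∀ k, Γ k ≤ M) :
    ∀ i, IsMotzkin (hillFlatten^[i] Γ) ∧ ∀ k, (hillFlatten^[i] Γ) k ≤ M - i := by
  intro i
  induction i with
  | zero => exact ⟨hΓ, by simpa using hM⟩
  | succ n ih =>
    rw [Function.iterate_succ_apply']
    refine ⟨motzkin_hf ih.1, ?_⟩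
    by_cases h : n < M
    · have hmx := hf_max ih.1 (M - n - 1) (fun k => by have := ih.2 k; omega)
      intro k; have := hmx k; omega
    · intro k
      have := hf_le (hillFlatten^[n] Γ) k
      have := ih.2 k
      omega

lemma numHills_zero {Γ : ℕ → ℕ} (hz : ∀ k, Γ k = 0) : numHills Γ = 0 := by
  unfold numHills
  have : {q : ℕ × ℕ | IsHillInterval Γ q.1 q.2} = ∅ := by
    ext q
    simp only [Set.mem_setOf_eq, Set.mem_empty_iff_false, iff_false]
    rintro ⟨h1, h2, h3⟩
    have := (h3 q.1 le_rfl h2).1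
    rw [hz, hz] at this
    omega
  rw [this, Set.ncard_empty]

lemma hill_sub {Γ : ℕ → ℕ} {a b : ℕ} (h : IsHillInterval (hillFlatten Γ) a b) :
    ∃ a' b', IsHillInterval Γ a' b' ∧ a ≤ a' ∧ b' ≤ b := by
  obtain ⟨ha1, hab, hmain⟩ := h
  by_cases hex : ∃ a' b' k, IsHillInterval Γ a' b' ∧ a' ≤ k ∧ k ≤ b' ∧ a ≤ k ∧ k ≤ b
  · obtain ⟨a', b', k, hh, h1, h2, h3, h4⟩ := hex
    refine ⟨a', b', hh, ?_, ?_⟩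
    · by_contra hc
      have e1 : Γ (a-1) = Γ (a'-1) + 1 := hill_mem_val hh (by omega) (by omega)
      have e2 : hillFlatten Γ (a-1) = Γ (a-1) - 1 := hf_in hh (by omega) (by omega)
      have e3 : Γ k = Γ (a'-1) + 1 := hill_mem_val hh h1 h2
      have e4 : hillFlatten Γ k = Γ k - 1 := hf_in hh h1 h2
      have e5 : hillFlatten Γ k = hillFlatten Γ (a-1) + 1 := (hmain k h3 h4).1
      omega
    · by_contra hc
      have e1 : Γ (b+1) = Γ (a'-1) + 1 := hill_mem_val hh (by omega) (by omega)
      have e2 : hillFlatten Γ (b+1) = Γ (b+1) - 1 := hf_in hh (by omega) (by omega)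
      have e3 : hillFlatten Γ (b+1) = hillFlatten Γ (a-1) := (hmain a le_rfl hab).2
      have e4 : Γ k = Γ (a'-1) + 1 := hill_mem_val hh h1 h2
      have e5 : hillFlatten Γ k = Γ k - 1 := hf_in hh h1 h2
      have e6 : hillFlatten Γ k = hillFlatten Γ (a-1) + 1 := (hmain k h3 h4).1
      omega
  · -- no Γ-hill meets [a,b]; then [a,b] is itself a Γ-hill
    have heq : ∀ c, a ≤ c → c ≤ b → hillFlatten Γ c = Γ c := by
      intro c hc1 hc2
      apply hf_out
      rintro ⟨p, q, hpq, hp, hq⟩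
      exact hex ⟨p, q, c, hpq, hp, hq, hc1, hc2⟩
    have heqa : hillFlatten Γ (a-1) = Γ (a-1) := by
      apply hf_out
      rintro ⟨p, q, hpq, hp, hq⟩
      by_cases haq : a ≤ q
      · exact hex ⟨p, q, a, hpq, by omega, haq, le_rfl, hab⟩
      · have hqe : q = a - 1 := by omega
        have e1 : Γ a = Γ (p-1) := by
          have := hill_bp1 hpq; rw [hqe, (by omega : a - 1 + 1 = a)] at this; exact this
        have e2 : Γ (a-1) = Γ (p-1) + 1 := hill_mem_val hpq hp hq
        have e3 : hillFlatten Γ a = hillFlatten Γ (a-1) + 1 := (hmain a le_rfl hab).1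
        have e4 : hillFlatten Γ a = Γ a := heq a le_rfl hab
        have e5 : hillFlatten Γ (a-1) = Γ (a-1) - 1 := hf_in hpq hp hq
        omega
    have heqb : hillFlatten Γ (b+1) = Γ (b+1) := by
      apply hf_out
      rintro ⟨p, q, hpq, hp, hq⟩
      by_cases hpb : p ≤ b
      · exact hex ⟨p, q, b, hpq, hpb, by omega, hab, le_rfl⟩
      · have hpe : p = b + 1 := by omega
        have e1 : Γ (b+1) = Γ (p-1) + 1 := hill_mem_val hpq hp hq
        have e2 : Γ (p-1) = Γ b := by rw [hpe]; simp
        have e3 : hillFlatten Γ b = hillFlatten Γ (a-1) + 1 := (hmain b hab le_rfl).1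
        have e4 : hillFlatten Γ b = Γ b := heq b hab le_rfl
        have e5 : hillFlatten Γ (b+1) = Γ (b+1) - 1 := hf_in hpq hp hq
        have e6 : hillFlatten Γ (b+1) = hillFlatten Γ (a-1) := (hmain a le_rfl hab).2
        omega
    refine ⟨a, b, ⟨ha1, hab, fun c hc1 hc2 => ?_⟩, le_rfl, le_rfl⟩
    have e1 := (hmain c hc1 hc2).1
    have e2 := (hmain c hc1 hc2).2
    have e3 := heq c hc1 hc2
    rw [heqa] at e1 e2
    rw [heqb] at e2
    omega

lemma numHills_hf_le {Γ : ℕ → ℕ} (hΓ : IsMotzkin Γ) :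
    numHills (hillFlatten Γ) ≤ numHills Γ := by
  classical
  unfold numHills
  have hch : ∀ q : ℕ × ℕ, ∃ p : ℕ × ℕ, IsHillInterval (hillFlatten Γ) q.1 q.2 →
      IsHillInterval Γ p.1 p.2 ∧ q.1 ≤ p.1 ∧ p.2 ≤ q.2 := by
    intro q
    by_cases hq : IsHillInterval (hillFlatten Γ) q.1 q.2
    · obtain ⟨a', b', h1, h2, h3⟩ := hill_sub hq
      exact ⟨(a', b'), fun _ => ⟨h1, h2, h3⟩⟩
    · exact ⟨(0, 0), fun h => absurd h hq⟩
  choose f hf using hch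
  refine Set.ncard_le_ncard_of_injOn f ?_ ?_ (hills_finite hΓ)
  · intro q hq
    exact (hf q hq).1
  · intro q1 h1 q2 h2 heq
    simp only [Set.mem_setOf_eq] at h1 h2
    obtain ⟨ha1, hb1, hc1⟩ := hf q1 h1
    obtain ⟨ha2, hb2, hc2⟩ := hf q2 h2
    have hk2 : q2.1 ≤ (f q1).1 := heq ▸ hb2
    have hk2' : (f q1).1 ≤ q2.2 := by
      rw [heq]; exact le_trans ha2.2.1 hc2
    have := hill_disjoint h1 h2 (k := (f q1).1) hb1 (le_trans ha1.2.1 hc1) hk2 hk2'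
    exact Prod.ext this.1 this.2

theorem stmt10 (Γ : ℕ → ℕ) (hΓ : IsMotzkin Γ) :
    numHills (hillFlatten Γ) ≤ numHills Γ ∧
    numHills (hillFlatten^[sSup (Set.range Γ)] Γ) = 0 := by
  refine ⟨numHills_hf_le hΓ, ?_⟩
  set M := sSup (Set.range Γ)
  have hb := iter_bound hΓ M (range_bdd hΓ) M
  exact numHills_zero (fun k => by have := hb.2 k; omega)
end
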